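/- Let ν ≥ 2 and λ ≥ 1 be integers and let s be an integer with 0 ≤ s ≤ ⌊ν/2⌋. Every partial triple system PTS(ν,λ) whose leave contains s independent edges has at most g(ν,λ,s) triples (counted with multiplicity). -/
import Mathlib


/-- The function `g(ν, λ, s)` from the paper. -/
noncomputable def gfun (ν lam s : ℕ) : ℤ :=
  if ν ≤ 2 then 0
  else if (ν % 6 = 0 ∧ lam % 2 = 1) ∨
          (ν % 6 = 2 ∧ (lam % 6 = 1 ∨ lam % 6 = 3)) ∨
          (ν % 6 = 2 ∧ lam % 6 = 5 ∧ s < ν / 2) ∨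
          (ν % 6 = 4 ∧ lam % 2 = 1 ∧ s < ν / 2) then
    ⌊(lam : ℚ) / 3 * (ν.choose 2 : ℚ) - (ν : ℚ) / 6⌋
  else if (ν % 6 = 2 ∧ lam % 6 = 5 ∧ s = ν / 2) ∨
          (ν % 6 = 4 ∧ lam % 2 = 1 ∧ s = ν / 2) then
    ⌊(lam : ℚ) / 3 * (ν.choose 2 : ℚ) - (ν : ℚ) / 6⌋ - 1
  else if (ν % 6 = 2 ∧ lam % 6 = 4 ∧ s = 0) ∨
          (ν % 6 = 5 ∧ lam % 3 = 1 ∧ s = 0) then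
    ⌊(lam : ℚ) / 3 * (ν.choose 2 : ℚ)⌋ - 1
  else ⌊(lam : ℚ) / 3 * (ν.choose 2 : ℚ) - 2 * (s : ℚ) / 3⌋

/-- The function `f(n, ν, Δ₂)` from the paper. -/
noncomputable def ffun (n ν Δ : ℕ) : ℤ :=
  ⌊(ν : ℚ) * ((n : ℚ) - (ν : ℚ)) * (Δ : ℚ) / 2⌋ +
  if Even ((n - ν) * Δ) ∨ Even ν then gfun ν Δ 0 else gfun ν Δ (ν / 2)

/-- The codegree of a pair `p` of vertices in a 3-multigraph `H`: the number of
triples of `H` (with multiplicity) containing `p`. -/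
def codegPair {V : Type*} [DecidableEq V] (H : Multiset (Finset V)) (p : Finset V) : ℕ :=
  Multiset.card (H.filter fun t => p ⊆ t)

open Finset

lemma codeg_cons {V : Type*} [DecidableEq V] (H : Multiset (Finset V)) (t p : Finset V) :
    codegPair (t ::ₘ H) p = (if p ⊆ t then 1 else 0) + codegPair H p := by
  simp only [codegPair, Multiset.filter_cons]
  split <;> simp <;> omega

lemma sum_codeg {V : Type*} [Fintype V] [DecidableEq V] (H : Multiset (Finset V))
    (h3 : ∀ t ∈ H, t.card = 3) :
    ∑ p ∈ (univ : Finset V).powersetCard 2, codegPair H p = 3 * Multiset.card H := by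
  induction H using Multiset.induction_on with
  | empty => simp [codegPair]
  | cons t H ih =>
    have ht : t.card = 3 := h3 t (Multiset.mem_cons_self t H)
    have ihh := ih (fun u hu => h3 u (Multiset.mem_cons_of_mem hu))
    simp only [codeg_cons, Finset.sum_add_distrib, ihh, Multiset.card_cons]
    have h1 : ∑ p ∈ (univ : Finset V).powersetCard 2, (if p ⊆ t then 1 else 0)
        = (((univ : Finset V).powersetCard 2).filter (fun p => p ⊆ t)).card :=
      (Finset.card_filter _ _).symm
    have h4 : ((univ : Finset V).powersetCard 2).filter (fun p => p ⊆ t) = t.powersetCard 2 := by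
      ext p
      simp only [Finset.mem_powersetCard, Finset.mem_filter, Finset.subset_univ, true_and]
      tauto
    rw [h1, h4, Finset.card_powersetCard, ht]
    norm_num; ring

lemma pairsAt_triple {V : Type*} [Fintype V] [DecidableEq V] (x : V) (t : Finset V)
    (ht : t.card = 3) :
    ((((univ : Finset V).powersetCard 2).filter (fun p => x ∈ p)).filter (fun p => p ⊆ t)).card
      = if x ∈ t then 2 else 0 := by
  split
  case isTrue hx =>
    have e1 : (((univ : Finset V).powersetCard 2).filter (fun p => x ∈ p)).filter (fun p => p ⊆ t)
        = (t.powersetCard 2).filter (fun p => x ∈ p) := by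
      ext p
      simp only [Finset.mem_filter, Finset.mem_powersetCard, Finset.subset_univ, true_and]
      tauto
    have e2 : (t.powersetCard 2).filter (fun p => ¬ x ∈ p) = (t.erase x).powersetCard 2 := by
      ext p
      simp only [Finset.mem_filter, Finset.mem_powersetCard, Finset.subset_erase]
      tauto
    have e3 := Finset.card_filter_add_card_filter_not
      (s := t.powersetCard 2) (p := fun p => x ∈ p)
    rw [e2, Finset.card_powersetCard, Finset.card_powersetCard, Finset.card_erase_of_mem hx,
      ht] at e3
    norm_num at e3
    rw [e1]
    omega
  case isFalse hx =>
    rw [Finset.card_eq_zero, Finset.filter_eq_empty_iff]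
    intro p hp
    simp only [Finset.mem_filter] at hp
    exact fun hpt => hx (hpt hp.2)

lemma sum_codeg_at {V : Type*} [Fintype V] [DecidableEq V] (H : Multiset (Finset V))
    (h3 : ∀ t ∈ H, t.card = 3) (x : V) :
    ∑ p ∈ ((univ : Finset V).powersetCard 2).filter (fun p => x ∈ p), codegPair H p
      = 2 * Multiset.card (H.filter (fun t => x ∈ t)) := by
  induction H using Multiset.induction_on with
  | empty => simp [codegPair]
  | cons t H ih =>
    have ht : t.card = 3 := h3 t (Multiset.mem_cons_self t H)
    have ihh := ih (fun u hu => h3 u (Multiset.mem_cons_of_mem hu))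
    simp only [codeg_cons, Finset.sum_add_distrib, ihh, Multiset.filter_cons]
    have h1 : (∑ p ∈ ((univ : Finset V).powersetCard 2).filter (fun p => x ∈ p),
          (if p ⊆ t then 1 else 0))
        = ((((univ : Finset V).powersetCard 2).filter (fun p => x ∈ p)).filter
            (fun p => p ⊆ t)).card :=
      (Finset.card_filter _ _).symm
    rw [h1, pairsAt_triple x t ht]
    split <;> simp <;> omega

lemma pair_struct {V : Type*} [DecidableEq V] {p : Finset V} {x : V}
    (hp : p.card = 2) (hx : x ∈ p) : ∃ y, y ≠ x ∧ p = {x, y} := by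
  obtain ⟨a, b, hab, rfl⟩ := Finset.card_eq_two.mp hp
  simp only [Finset.mem_insert, Finset.mem_singleton] at hx
  rcases hx with rfl | rfl
  · exact ⟨b, fun h => hab h.symm, rfl⟩
  · exact ⟨a, hab, Finset.pair_comm a x⟩

lemma pairsAt_card {V : Type*} [Fintype V] [DecidableEq V] (x : V) :
    (((univ : Finset V).powersetCard 2).filter (fun p => x ∈ p)).card
      = Fintype.card V - 1 := by
  have e : ((univ : Finset V).powersetCard 2).filter (fun p => x ∈ p)
      = ((univ : Finset V).erase x).image (fun y => ({x, y} : Finset V)) := by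
    ext p
    simp only [Finset.mem_filter, Finset.mem_powersetCard, Finset.subset_univ, true_and,
      Finset.mem_image, Finset.mem_erase, Finset.mem_univ, and_true]
    constructor
    · rintro ⟨hc, hx⟩
      obtain ⟨y, hy, rfl⟩ := pair_struct hc hx
      exact ⟨y, hy, rfl⟩
    · rintro ⟨y, hy, rfl⟩
      refine ⟨?_, Finset.mem_insert_self x _⟩
      rw [Finset.card_insert_of_notMem (by simp [Ne.symm hy]), Finset.card_singleton]
  rw [e, Finset.card_image_of_injOn, Finset.card_erase_of_mem (Finset.mem_univ x),
    Finset.card_univ]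
  intro a ha b hb hab
  simp only [Finset.mem_coe, Finset.mem_erase] at ha hb
  simp only at hab
  have : a ∈ ({x, b} : Finset V) := by
    rw [← hab]; exact Finset.mem_insert_of_mem (Finset.mem_singleton_self a)
  simp only [Finset.mem_insert, Finset.mem_singleton] at this
  tauto

lemma sum_dL {V : Type*} [Fintype V] [DecidableEq V] (m : Finset V → ℕ) :
    ∑ x : V, ∑ p ∈ ((univ : Finset V).powersetCard 2).filter (fun p => x ∈ p), m p
      = 2 * ∑ p ∈ (univ : Finset V).powersetCard 2, m p := by
  simp only [Finset.sum_filter]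
  rw [Finset.sum_comm, Finset.mul_sum]
  refine Finset.sum_congr rfl (fun p hp => ?_)
  rw [Finset.sum_ite_mem, Finset.univ_inter, Finset.sum_const]
  have : p.card = 2 := (Finset.mem_powersetCard.mp hp).2
  rw [this]; ring

lemma dL_le_L {V : Type*} [Fintype V] [DecidableEq V] (m : Finset V → ℕ) (x : V) :
    ∑ p ∈ ((univ : Finset V).powersetCard 2).filter (fun p => x ∈ p), m p
      ≤ ∑ p ∈ (univ : Finset V).powersetCard 2, m p :=
  Finset.sum_le_sum_of_subset (Finset.filter_subset _ _)

lemma m_le_dL {V : Type*} [Fintype V] [DecidableEq V] (m : Finset V → ℕ) (x : V)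
    (p : Finset V) (hp : p ∈ (univ : Finset V).powersetCard 2) (hx : x ∈ p) :
    m p ≤ ∑ q ∈ ((univ : Finset V).powersetCard 2).filter (fun q => x ∈ q), m q :=
  Finset.single_le_sum (fun _ _ => Nat.zero_le _)
    (Finset.mem_filter.mpr ⟨hp, hx⟩)

lemma lemF5 {V : Type*} [Fintype V] [DecidableEq V] (m : Finset V → ℕ)
    (P : Finset (Finset V))
    (hPsub : P ⊆ (univ : Finset V).powersetCard 2)
    (hPdisj : ∀ p ∈ P, ∀ q ∈ P, p ≠ q → Disjoint p q)
    (hmP : ∀ p ∈ P, 1 ≤ m p)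
    (hcover : ∀ x : V, ∃ p ∈ P, x ∈ p)
    (hodd : ∀ x : V, Odd (∑ p ∈ ((univ : Finset V).powersetCard 2).filter (fun p => x ∈ p), m p))
    (hL2 : 2 * ∑ p ∈ (univ : Finset V).powersetCard 2, m p = Fintype.card V + 2) :
    False := by
  set Pairs := (univ : Finset V).powersetCard 2 with hPairs
  set dL := fun x : V => ∑ p ∈ Pairs.filter (fun p => x ∈ p), m p with hdL
  have hdsum : ∑ x : V, dL x = Fintype.card V + 2 := by
    rw [hdL]; rw [sum_dL m, hL2]
  have hd1 : ∀ x, 1 ≤ dL x := by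
    intro x
    have := hodd x
    rcases this with ⟨k, hk⟩
    simp only [hdL]; omega
  -- the deficiency function sums to 2
  have hgsum : ∑ x : V, (dL x - 1) = 2 := by
    have h0 : ∑ x : V, dL x = ∑ x : V, ((dL x - 1) + 1) :=
      Finset.sum_congr rfl (fun x _ => by have := hd1 x; omega)
    rw [Finset.sum_add_distrib, Finset.sum_const, Finset.card_univ, smul_eq_mul] at h0
    omega
  -- find the unique vertex of degree 3
  obtain ⟨v, _, hv⟩ : ∃ v ∈ (univ : Finset V), dL v - 1 ≠ 0 := by
    apply Finset.exists_ne_zero_of_sum_ne_zero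
    rw [hgsum]; norm_num
  have hvle : dL v - 1 ≤ 2 := by
    rw [← hgsum]
    exact Finset.single_le_sum (f := fun x => dL x - 1) (fun _ _ => Nat.zero_le _) (Finset.mem_univ v)
  have hv3 : dL v = 3 := by
    rcases hodd v with ⟨k, hk⟩
    simp only [hdL] at hk ⊢
    simp only [hdL] at hv hvle
    omega
  have hother : ∀ w : V, w ≠ v → dL w = 1 := by
    intro w hw
    have hsplit : (∑ x ∈ (univ : Finset V).erase v, (dL x - 1)) + (dL v - 1) = 2 := by
      rw [Finset.sum_erase_add _ _ (Finset.mem_univ v), hgsum]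
    have : ∑ x ∈ (univ : Finset V).erase v, (dL x - 1) = 0 := by omega
    have hz := (Finset.sum_eq_zero_iff).mp this w (Finset.mem_erase.mpr ⟨hw, Finset.mem_univ w⟩)
    have := hd1 w
    omega
  -- the matching pair of v
  obtain ⟨pv, hpvP, hvpv⟩ := hcover v
  have hpvcard : pv.card = 2 := (Finset.mem_powersetCard.mp (hPsub hpvP)).2
  obtain ⟨w, hwv, hpveq⟩ := pair_struct hpvcard hvpv
  have hwpv : w ∈ pv := by rw [hpveq]; exact Finset.mem_insert_of_mem (Finset.mem_singleton_self w)
  have hmpv : m pv = 1 := by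
    have h1 := hmP pv hpvP
    have h2 : m pv ≤ dL w := m_le_dL m w pv (hPsub hpvP) hwpv
    rw [hother w hwv] at h2
    omega
  -- there is extra mass at v
  have hsum_v : (∑ q ∈ (Pairs.filter (fun p => v ∈ p)).erase pv, m q) + m pv = dL v := by
    exact Finset.sum_erase_add _ _ (Finset.mem_filter.mpr ⟨hPsub hpvP, hvpv⟩)
  obtain ⟨q, hq, hmq⟩ : ∃ q ∈ (Pairs.filter (fun p => v ∈ p)).erase pv, m q ≠ 0 := by
    apply Finset.exists_ne_zero_of_sum_ne_zero
    rw [hv3] at hsum_v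
    omega
  rw [Finset.mem_erase, Finset.mem_filter] at hq
  obtain ⟨hqpv, hqPairs, hvq⟩ := hq
  have hqcard : q.card = 2 := (Finset.mem_powersetCard.mp hqPairs).2
  obtain ⟨u, huv, hqeq⟩ := pair_struct hqcard hvq
  have huw : u ≠ w := by
    rintro rfl
    exact hqpv (hqeq.trans hpveq.symm)
  -- the matching pair of u
  obtain ⟨pu, hpuP, hupu⟩ := hcover u
  have hpunepv : pu ≠ pv := by
    rintro rfl
    rw [hpveq] at hupu
    simp only [Finset.mem_insert, Finset.mem_singleton] at hupu
    tauto
  have hvnotpu : v ∉ pu := by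
    intro hv'
    exact (Finset.disjoint_left.mp (hPdisj pu hpuP pv hpvP hpunepv) hv') hvpv
  have hqnepu : q ≠ pu := by
    rintro rfl
    exact hvnotpu hvq
  have huq : u ∈ q := by rw [hqeq]; exact Finset.mem_insert_of_mem (Finset.mem_singleton_self u)
  -- dL u ≥ m pu + m q ≥ 2 but dL u = 1
  have hsub : ({pu, q} : Finset (Finset V)) ⊆ Pairs.filter (fun p => u ∈ p) := by
    intro r hr
    simp only [Finset.mem_insert, Finset.mem_singleton] at hr
    rcases hr with rfl | rfl
    · exact Finset.mem_filter.mpr ⟨hPsub hpuP, hupu⟩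
    · exact Finset.mem_filter.mpr ⟨hqPairs, huq⟩
  have h2le : m pu + m q ≤ dL u := by
    have := Finset.sum_le_sum_of_subset (f := m) hsub
    rwa [Finset.sum_pair (Ne.symm hqnepu)] at this
  have := hmP pu hpuP
  have hu1 : dL u = 1 := hother u huv
  omega

lemma two_mul_choose_two (ν : ℕ) (hν : 1 ≤ ν) : 2 * ν.choose 2 = ν * (ν - 1) := by
  have hdvd : 2 ∣ ν * (ν - 1) := by
    have h := Nat.even_mul_succ_self (ν - 1)
    have h' : ν - 1 + 1 = ν := by omega
    rw [h'] at h
    rw [mul_comm]; exact h.two_dvd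
  rw [Nat.choose_two_right, Nat.mul_div_cancel' hdvd]

lemma choose2_mod3_one {ν : ℕ} (h : ν % 6 = 2 ∨ ν % 6 = 5) : ν.choose 2 % 3 = 1 := by
  have h2C := two_mul_choose_two ν (by omega)
  have hmm : (ν * (ν - 1)) % 3 = ((ν % 3) * ((ν - 1) % 3)) % 3 := Nat.mul_mod _ _ _
  have ha : ν % 3 = 2 := by omega
  have hb : (ν - 1) % 3 = 1 := by omega
  rw [ha, hb] at hmm
  norm_num at hmm
  obtain ⟨X, hX⟩ : ∃ X, X = ν * (ν - 1) := ⟨_, rfl⟩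
  rw [← hX] at h2C hmm
  omega

lemma choose2_mod3_zero {ν : ℕ} (h : ν % 6 = 4) : ν.choose 2 % 3 = 0 := by
  have h2C := two_mul_choose_two ν (by omega)
  have hmm : (ν * (ν - 1)) % 3 = ((ν % 3) * ((ν - 1) % 3)) % 3 := Nat.mul_mod _ _ _
  have ha : ν % 3 = 1 := by omega
  have hb : (ν - 1) % 3 = 0 := by omega
  rw [ha, hb] at hmm
  norm_num at hmm
  obtain ⟨X, hX⟩ : ∃ X, X = ν * (ν - 1) := ⟨_, rfl⟩
  rw [← hX] at h2C hmm
  omega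


set_option maxHeartbeats 2000000 in
/-- a `PTS(ν, λ)` whose leave contains `s` independent edges has at most
`g(ν, λ, s)` triples (counted with multiplicity). -/
theorem stmt_2 (ν lam s : ℕ) (hν : 2 ≤ ν) (hlam : 1 ≤ lam) (hs : s ≤ ν / 2)
    (H : Multiset (Finset (Fin ν)))
    (h3 : ∀ t ∈ H, t.card = 3)
    (hPTS : ∀ x y : Fin ν, x ≠ y → codegPair H {x, y} ≤ lam)
    (P : Finset (Finset (Fin ν)))
    (hPcard : P.card = s)
    (hPpairs : ∀ p ∈ P, p.card = 2)
    (hPdisj : ∀ p ∈ P, ∀ q ∈ P, p ≠ q → Disjoint p q)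
    (hPleave : ∀ p ∈ P, codegPair H p < lam) :
    (Multiset.card H : ℤ) ≤ gfun ν lam s := by
  classical
  by_cases hν2 : ν ≤ 2
  · have hH : H = 0 := by
      rw [Multiset.eq_zero_iff_forall_notMem]
      intro t ht
      have h1 := h3 t ht
      have h2 : t.card ≤ ν := by
        simpa using Finset.card_le_univ t
      omega
    rw [hH]
    simp [gfun, hν2]
  -- main case
  have hcard : Fintype.card (Fin ν) = ν := Fintype.card_fin ν
  set b := Multiset.card H with hbdef
  obtain ⟨L, hLdef⟩ : ∃ L, L = ∑ p ∈ (univ : Finset (Fin ν)).powersetCard 2,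
      (lam - codegPair H p) := ⟨_, rfl⟩
  obtain ⟨M, hMdef⟩ : ∃ M, M = lam * ν.choose 2 := ⟨_, rfl⟩
  obtain ⟨N, hNdef⟩ : ∃ N, N = lam * (ν - 1) := ⟨_, rfl⟩
  have hcodle : ∀ p ∈ (univ : Finset (Fin ν)).powersetCard 2, codegPair H p ≤ lam := by
    intro p hp
    have hc : p.card = 2 := (Finset.mem_powersetCard.mp hp).2
    obtain ⟨x, y, hxy, rfl⟩ := Finset.card_eq_two.mp hc
    exact hPTS x y hxy
  -- global identity
  have hM : 3 * b + L = M := by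
    have h1 : ∑ p ∈ (univ : Finset (Fin ν)).powersetCard 2, lam = M := by
      rw [Finset.sum_const, Finset.card_powersetCard, Finset.card_univ, hcard, smul_eq_mul,
        hMdef, mul_comm]
    have h2 : ∑ p ∈ (univ : Finset (Fin ν)).powersetCard 2, lam
        = ∑ p ∈ (univ : Finset (Fin ν)).powersetCard 2,
            (codegPair H p + (lam - codegPair H p)) :=
      Finset.sum_congr rfl (fun p hp => by have := hcodle p hp; omega)
    rw [Finset.sum_add_distrib, sum_codeg H h3, ← hLdef] at h2
    rw [← h1, h2, hbdef]
  -- local (vertex) identity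
  have hdeg : ∀ x : Fin ν, ∃ d,
      (∑ p ∈ ((univ : Finset (Fin ν)).powersetCard 2).filter (fun p => x ∈ p),
        (lam - codegPair H p)) + 2 * d = N := by
    intro x
    refine ⟨Multiset.card (H.filter (fun t => x ∈ t)), ?_⟩
    have hs1 : ∑ p ∈ ((univ : Finset (Fin ν)).powersetCard 2).filter (fun p => x ∈ p), lam
        = lam * (ν - 1) := by
      rw [Finset.sum_const, pairsAt_card, hcard, smul_eq_mul, mul_comm]
    have h2 : ∑ p ∈ ((univ : Finset (Fin ν)).powersetCard 2).filter (fun p => x ∈ p), lam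
        = ∑ p ∈ ((univ : Finset (Fin ν)).powersetCard 2).filter (fun p => x ∈ p),
            (codegPair H p + (lam - codegPair H p)) :=
      Finset.sum_congr rfl
        (fun p hp => by have := hcodle p (Finset.filter_subset _ _ hp); omega)
    rw [Finset.sum_add_distrib, sum_codeg_at H h3 x] at h2
    rw [hNdef, ← hs1, h2]
    ring
  have hdegsum : ∑ x : Fin ν,
      (∑ p ∈ ((univ : Finset (Fin ν)).powersetCard 2).filter (fun p => x ∈ p),
        (lam - codegPair H p)) = 2 * L := by
    rw [hLdef]; exact sum_dL _
  have hPsub : P ⊆ (univ : Finset (Fin ν)).powersetCard 2 := by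
    intro p hp
    exact Finset.mem_powersetCard.mpr ⟨Finset.subset_univ p, hPpairs p hp⟩
  have hmP : ∀ p ∈ P, 1 ≤ lam - codegPair H p := by
    intro p hp; have := hPleave p hp; omega
  have hsL : s ≤ L := by
    rw [hLdef, ← hPcard]
    calc P.card = ∑ p ∈ P, 1 := by simp
    _ ≤ ∑ p ∈ P, (lam - codegPair H p) := Finset.sum_le_sum hmP
    _ ≤ _ := Finset.sum_le_sum_of_subset hPsub
  rw [gfun, if_neg hν2]
  split_ifs with h1 h2 h3g
  -- BRANCH 1
  · have hkey : lam % 2 = 1 ∧ ν % 2 = 0 := by omega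
    have hN2 : N % 2 = 1 := by
      have := Nat.mul_mod lam (ν - 1) 2
      rw [← hNdef, hkey.1, (by omega : (ν - 1) % 2 = 1)] at this
      omega
    have hd1 : ∀ x : Fin ν, 1 ≤ ∑ p ∈ ((univ : Finset (Fin ν)).powersetCard 2).filter
        (fun p => x ∈ p), (lam - codegPair H p) := by
      intro x; obtain ⟨d, hd⟩ := hdeg x; omega
    have hF3 : ν ≤ 2 * L := by
      rw [← hdegsum]
      have := Finset.card_nsmul_le_sum (univ : Finset (Fin ν))
        (fun x => ∑ p ∈ ((univ : Finset (Fin ν)).powersetCard 2).filter (fun p => x ∈ p),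
          (lam - codegPair H p)) 1
        (fun x _ => hd1 x)
      simpa using this
    have hnat : 6 * b + ν ≤ 2 * M := by omega
    rw [Int.le_floor]
    rw [hMdef] at hnat
    have hq : ((6 * b + ν : ℕ) : ℚ) ≤ ((2 * (lam * ν.choose 2) : ℕ) : ℚ) := Nat.cast_le.mpr hnat
    push_cast at hq ⊢
    linarith
  -- BRANCH 2
  · have hkey : lam % 2 = 1 ∧ ν % 2 = 0 ∧ s = ν / 2 := by omega
    have hN2 : N % 2 = 1 := by
      have := Nat.mul_mod lam (ν - 1) 2
      rw [← hNdef, hkey.1, (by omega : (ν - 1) % 2 = 1)] at this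
      omega
    have hd1 : ∀ x : Fin ν, 1 ≤ ∑ p ∈ ((univ : Finset (Fin ν)).powersetCard 2).filter
        (fun p => x ∈ p), (lam - codegPair H p) := by
      intro x; obtain ⟨d, hd⟩ := hdeg x; omega
    have hF3 : ν ≤ 2 * L := by
      rw [← hdegsum]
      have := Finset.card_nsmul_le_sum (univ : Finset (Fin ν))
        (fun x => ∑ p ∈ ((univ : Finset (Fin ν)).powersetCard 2).filter (fun p => x ∈ p),
          (lam - codegPair H p)) 1
        (fun x _ => hd1 x)
      simpa using this
    have hbU : P.biUnion (fun p => p) = (univ : Finset (Fin ν)) := by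
      apply Finset.eq_univ_of_card
      rw [Finset.card_biUnion (fun p hp q hq hpq => hPdisj p hp q hq hpq)]
      have e1 : ∑ p ∈ P, p.card = ∑ p ∈ P, 2 :=
        Finset.sum_congr rfl (fun p hp => by simp [hPpairs p hp])
      rw [e1, Finset.sum_const, smul_eq_mul, hPcard, hcard]
      omega
    have hcover : ∀ x : Fin ν, ∃ p ∈ P, x ∈ p := by
      intro x
      have : x ∈ P.biUnion (fun p => p) := by rw [hbU]; exact Finset.mem_univ x
      obtain ⟨p, hp, hx⟩ := Finset.mem_biUnion.mp this
      exact ⟨p, hp, hx⟩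
    have hodd : ∀ x : Fin ν, Odd (∑ p ∈ ((univ : Finset (Fin ν)).powersetCard 2).filter
        (fun p => x ∈ p), (lam - codegPair H p)) := by
      intro x
      obtain ⟨d, hd⟩ := hdeg x
      rw [Nat.odd_iff]
      omega
    have hF5 : L ≠ ν / 2 + 1 := by
      intro hLeq
      refine lemF5 (fun p => lam - codegPair H p) P hPsub hPdisj hmP hcover hodd ?_
      rw [hcard, ← hLdef, hLeq]
      omega
    -- mod-3 information
    have hM3 : M % 3 = (ν / 2 + 1) % 3 := by
      rcases h2 with ⟨hν6, hlam6, _⟩ | ⟨hν6, _, _⟩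
      · have hC3 := choose2_mod3_one (Or.inl hν6)
        have := Nat.mul_mod lam (ν.choose 2) 3
        rw [← hMdef, hC3, (by omega : lam % 3 = 2)] at this
        omega
      · have hC3 := choose2_mod3_zero hν6
        have := Nat.mul_mod lam (ν.choose 2) 3
        rw [← hMdef, hC3, mul_zero] at this
        omega
    have hnat : 6 * b + ν + 6 ≤ 2 * M := by omega
    rw [show ((⌊(lam : ℚ) / 3 * (ν.choose 2 : ℚ) - (ν : ℚ) / 6⌋ - 1 : ℤ))
      = ⌊(lam : ℚ) / 3 * (ν.choose 2 : ℚ) - (ν : ℚ) / 6⌋ - 1 from rfl]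
    have : (b : ℤ) + 1 ≤ ⌊(lam : ℚ) / 3 * (ν.choose 2 : ℚ) - (ν : ℚ) / 6⌋ := by
      rw [Int.le_floor]
      rw [hMdef] at hnat
      have hq : ((6 * b + ν + 6 : ℕ) : ℚ) ≤ ((2 * (lam * ν.choose 2) : ℕ) : ℚ) :=
        Nat.cast_le.mpr hnat
      push_cast at hq ⊢
      linarith
    omega
  -- BRANCH 3
  · have hN2 : N % 2 = 0 := by
      have hmm := Nat.mul_mod lam (ν - 1) 2
      rw [← hNdef] at hmm
      rcases h3g with ⟨hν6, hlam6, _⟩ | ⟨hν6, hlam3, _⟩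
      · rw [(by omega : lam % 2 = 0)] at hmm; omega
      · rw [(by omega : (ν - 1) % 2 = 0), mul_zero] at hmm; omega
    have hM3 : M % 3 = 1 := by
      have hmm := Nat.mul_mod lam (ν.choose 2) 3
      rw [← hMdef] at hmm
      rcases h3g with ⟨hν6, hlam6, _⟩ | ⟨hν6, hlam3, _⟩
      · rw [choose2_mod3_one (Or.inl hν6), (by omega : lam % 3 = 1)] at hmm; omega
      · rw [choose2_mod3_one (Or.inr hν6), hlam3] at hmm; omega
    have hF4 : L ≠ 1 := by
      intro hL1
      have hds : ∑ x : Fin ν,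
          (∑ p ∈ ((univ : Finset (Fin ν)).powersetCard 2).filter (fun p => x ∈ p),
            (lam - codegPair H p)) = 2 := by rw [hdegsum, hL1]
      obtain ⟨x, _, hx⟩ : ∃ x ∈ (univ : Finset (Fin ν)),
          (∑ p ∈ ((univ : Finset (Fin ν)).powersetCard 2).filter (fun p => x ∈ p),
            (lam - codegPair H p)) ≠ 0 := by
        apply Finset.exists_ne_zero_of_sum_ne_zero
        rw [hds]; norm_num
      obtain ⟨d, hd⟩ := hdeg x
      have hle := dL_le_L (fun p => lam - codegPair H p) x
      rw [← hLdef] at hle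
      omega
    have hnat : 3 * b + 4 ≤ M := by omega
    have : (b : ℤ) + 1 ≤ ⌊(lam : ℚ) / 3 * (ν.choose 2 : ℚ)⌋ := by
      rw [Int.le_floor]
      rw [hMdef] at hnat
      have hq : ((3 * b + 4 : ℕ) : ℚ) ≤ ((lam * ν.choose 2 : ℕ) : ℚ) := Nat.cast_le.mpr hnat
      push_cast at hq ⊢
      linarith
    omega
  -- BRANCH 4
  · have hpar : lam % 2 = 0 ∨ ν % 2 = 1 := by omega
    have hN2 : N % 2 = 0 := by
      have hmm := Nat.mul_mod lam (ν - 1) 2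
      rw [← hNdef] at hmm
      rcases hpar with hp | hp
      · rw [hp] at hmm; omega
      · rw [(by omega : (ν - 1) % 2 = 0), mul_zero] at hmm; omega
    have hF2 : 4 * s ≤ 2 * L := by
      have hd2 : ∀ p ∈ P, ∀ x ∈ p, 2 ≤ ∑ q ∈ ((univ : Finset (Fin ν)).powersetCard 2).filter
          (fun q => x ∈ q), (lam - codegPair H q) := by
        intro p hp x hx
        have h1 := m_le_dL (fun q => lam - codegPair H q) x p (hPsub hp) hx
        have h2 := hmP p hp
        obtain ⟨d, hd⟩ := hdeg x
        omega
      calc 4 * s = ∑ p ∈ P, 4 := by rw [Finset.sum_const, hPcard, smul_eq_mul]; ring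
      _ ≤ ∑ p ∈ P, ∑ x ∈ p, (∑ q ∈ ((univ : Finset (Fin ν)).powersetCard 2).filter
            (fun q => x ∈ q), (lam - codegPair H q)) := by
        refine Finset.sum_le_sum (fun p hp => ?_)
        calc (4 : ℕ) = ∑ x ∈ p, 2 := by
              rw [Finset.sum_const, hPpairs p hp, smul_eq_mul]
        _ ≤ _ := Finset.sum_le_sum (fun x hx => hd2 p hp x hx)
      _ = ∑ x ∈ P.biUnion (fun p => p), (∑ q ∈ ((univ : Finset (Fin ν)).powersetCard 2).filter
            (fun q => x ∈ q), (lam - codegPair H q)) := by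
        have hpd : Set.PairwiseDisjoint (↑P : Set (Finset (Fin ν))) (fun p => p) :=
          fun p hp q hq hpq => hPdisj p (by simpa using hp) q (by simpa using hq) hpq
        exact (Finset.sum_biUnion hpd).symm
      _ ≤ ∑ x : Fin ν, (∑ q ∈ ((univ : Finset (Fin ν)).powersetCard 2).filter
            (fun q => x ∈ q), (lam - codegPair H q)) :=
        Finset.sum_le_sum_of_subset (Finset.subset_univ _)
      _ = 2 * L := hdegsum
    have hnat : 3 * b + 2 * s ≤ M := by omega
    rw [Int.le_floor]
    rw [hMdef] at hnat
    have hq : ((3 * b + 2 * s : ℕ) : ℚ) ≤ ((lam * ν.choose 2 : ℕ) : ℚ) := Nat.cast_le.mpr hnat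
    push_cast at hq ⊢
    linarith
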